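/- For all n ≥ 2 and k ≥ 1, the number of permutations π ∈ S_n with br(π) = k and pk(π⁻¹) = 0 equals 2·C(n−2, k−1), which is twice the number of permutations σ ∈ S_{n−1} with udr(σ) = k and pk(σ⁻¹) = 0. -/

import Mathlib

/-!
If `π⁻¹` has no peaks, the sequence of positions of the values `0, 1, …` decreases down to
position `0` (value `π 0`) and increases afterwards. So `π` is determined by the set of positions
`u` with `π u < π 0`: these carry the small values in decreasing order, the remaining positions
the large values in increasing order, and every set of nonzero positions arises. Such a `π`
descends at `v` iff `π (v + 1) < π 0`, so the descent word is a bijection onto all binary words of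
length `n - 1`. Then `br π - 1` is the number of letter changes of the descent word and
`udr σ - 1` that of `0` followed by the descent word of `σ`; a binary word is determined by its
first letter and the set of places where it changes, which gives `2 * C(n-2, k-1)` and
`C(n-2, k-1)`.
-/


open Finset

section Defs
variable {α : Type*} [LinearOrder α]

/-- Number of descents of a list. -/
def descentsCount : List α → ℕ
  | a :: b :: l => (if b < a then 1 else 0) + descentsCount (b :: l)
  | _ => 0

/-- Number of (interior) peaks of a list. -/
def peaksCount : List α → ℕ
  | a :: b :: c :: l => (if a < b ∧ c < b then 1 else 0) + peaksCount (b :: c :: l)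
  | _ => 0

/-- 1 if the list starts with a descent, else 0. -/
def initDesc : List α → ℕ
  | a :: b :: _ => if b < a then 1 else 0
  | _ => 0

/-- Number of left peaks of a list. -/
def leftPeaksCount (l : List α) : ℕ := initDesc l + peaksCount l

/-- Number of interior direction changes. -/
def turnsCount : List α → ℕ
  | a :: b :: c :: l => (if (a < b ∧ c < b) ∨ (b < a ∧ b < c) then 1 else 0) + turnsCount (b :: c :: l)
  | _ => 0

/-- Number of biruns (maximal monotone consecutive subsequences). -/
def birunsCount (l : List α) : ℕ := if l = [] then 0 else turnsCount l + 1

/-- Number of up-down runs. -/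
def udrCount (l : List α) : ℕ := initDesc l + birunsCount l

/-- `IsAltFrom true l` : the list `l` alternates starting with a descent. -/
def IsAltFrom : Bool → List α → Prop
  | _, [] => True
  | _, [_] => True
  | true, a :: b :: l => b < a ∧ IsAltFrom false (b :: l)
  | false, a :: b :: l => a < b ∧ IsAltFrom true (b :: l)

end Defs

def desP {n : ℕ} (π : Equiv.Perm (Fin n)) : ℕ := descentsCount (List.ofFn ⇑π)
def pkP {n : ℕ} (π : Equiv.Perm (Fin n)) : ℕ := peaksCount (List.ofFn ⇑π)
def lpkP {n : ℕ} (π : Equiv.Perm (Fin n)) : ℕ := leftPeaksCount (List.ofFn ⇑π)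
def brP {n : ℕ} (π : Equiv.Perm (Fin n)) : ℕ := birunsCount (List.ofFn ⇑π)
def udrP {n : ℕ} (π : Equiv.Perm (Fin n)) : ℕ := udrCount (List.ofFn ⇑π)
def AltP {n : ℕ} (π : Equiv.Perm (Fin n)) : Prop := IsAltFrom true (List.ofFn ⇑π)

def fixedCount {n : ℕ} (π : Equiv.Perm (Fin n)) : ℕ :=
  (Finset.univ.filter fun x => π x = x).card
def cycleCount {n : ℕ} (π : Equiv.Perm (Fin n)) : ℕ := π.cycleType.card + fixedCount π
def oddCycleCount {n : ℕ} (π : Equiv.Perm (Fin n)) : ℕ :=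
  (π.cycleType.filter fun l => l % 2 = 1).card + fixedCount π

noncomputable def stirC (n k : ℕ) : ℕ := Nat.card {π : Equiv.Perm (Fin n) // cycleCount π = k}
noncomputable def dOdd (n k : ℕ) : ℕ :=
  Nat.card {π : Equiv.Perm (Fin n) // cycleCount π = k ∧ ∀ l ∈ π.cycleType, l % 2 = 1}
noncomputable def eOdd (n k : ℕ) : ℕ := Nat.card {π : Equiv.Perm (Fin n) // oddCycleCount π = k}
noncomputable def fOdd (n k m : ℕ) : ℕ :=
  Nat.card {π : Equiv.Perm (Fin n) // oddCycleCount π = k ∧ cycleCount π = m}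

noncomputable def eulerE (k : ℕ) : ℕ := Nat.card {π : Equiv.Perm (Fin k) // AltP π}

section ChangeSet

variable {m : ℕ}

def changeSet (u : Fin (m + 1) → Bool) : Finset (Fin m) :=
  {i | u i.castSucc ≠ u i.succ}

lemma card_changeSet_cons (b : Bool) (u : Fin (m + 1) → Bool) :
    #(changeSet (Fin.cons b u : Fin (m + 2) → Bool))
      = (if b ≠ u 0 then 1 else 0) + #(changeSet u) := by
  simp only [changeSet, Finset.card_filter, Fin.sum_univ_succ, Fin.cons_zero, Fin.castSucc_zero,
    ← Fin.succ_castSucc, Fin.cons_succ]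

lemma eq_of_changeSet_eq {u v : Fin (m + 1) → Bool} (h0 : u 0 = v 0)
    (h : changeSet u = changeSet v) : u = v := by
  funext i
  induction i using Fin.induction with
  | zero => exact h0
  | succ i ih =>
    have hi : (u i.castSucc ≠ u i.succ) ↔ (v i.castSucc ≠ v i.succ) := by
      simpa [changeSet] using congrArg (i ∈ ·) h
    rw [ih] at hi
    cases hu : u i.succ <;> cases hv : v i.succ <;> simp_all

lemma changeSet_cons_bijective (b : Bool) :
    Function.Bijective fun w : Fin m → Bool =>
      changeSet (Fin.cons b w : Fin (m + 1) → Bool) := by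
  refine (Nat.bijective_iff_injective_and_card _).mpr ⟨fun w w' h => ?_, by simp⟩
  simpa using eq_of_changeSet_eq (by simp) h

lemma card_changeSet_cons_eq_choose (b : Bool) (j : ℕ) :
    Nat.card {w : Fin m → Bool // #(changeSet (Fin.cons b w : Fin (m + 1) → Bool)) = j}
      = m.choose j := by
  rw [Nat.card_congr ((Equiv.ofBijective _ (changeSet_cons_bijective b)).subtypeEquiv
    (p := fun w => #(changeSet (Fin.cons b w : Fin (m + 1) → Bool)) = j) (q := fun s => #s = j)
    fun _ => Iff.rfl)]
  simp [Nat.card_eq_fintype_card, Fintype.card_finset_len]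

lemma card_changeSet_eq_choose (j : ℕ) :
    Nat.card {u : Fin (m + 1) → Bool // #(changeSet u) = j} = 2 * m.choose j := by
  let P (b : Bool) (w : Fin m → Bool) : Prop :=
    #(changeSet (Fin.cons b w : Fin (m + 1) → Bool)) = j
  have e := ((Fin.consEquiv fun _ => Bool).subtypeEquiv (p := fun x => P x.1 x.2)
    (q := fun u => #(changeSet u) = j) fun _ => Iff.rfl).symm.trans
    (Equiv.subtypeProdEquivSigmaSubtype P)
  rw [Nat.card_congr e, Nat.card_sigma, Fintype.sum_bool, card_changeSet_cons_eq_choose,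
    card_changeSet_cons_eq_choose, two_mul]

end ChangeSet

lemma count_ofFn_eq_sum {α : Type*} (P : α → α → α → Prop)
    [∀ a b c, Decidable (P a b c)] (c : List α → ℕ)
    (hc : ∀ a b d l, c (a :: b :: d :: l) = (if P a b d then 1 else 0) + c (b :: d :: l))
    (h2 : ∀ a b, c [a, b] = 0) :
    ∀ {m : ℕ} (f : Fin (m + 2) → α), c (List.ofFn f) =
      ∑ i : Fin m, if P (f i.castSucc.castSucc) (f i.succ.castSucc) (f i.succ.succ) then 1 else 0
  | 0, f => by simp [List.ofFn_succ, h2]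
  | m + 1, f => by
    have htail : List.ofFn (fun i : Fin (m + 2) => f i.succ)
        = f 1 :: f 2 :: List.ofFn (fun i : Fin m => f i.succ.succ.succ) := by
      simp [List.ofFn_succ]
    rw [List.ofFn_succ, htail, hc, ← htail, count_ofFn_eq_sum P c hc h2 (fun i => f i.succ),
      Fin.sum_univ_succ]
    rfl

section Lists

variable {α : Type*} [LinearOrder α]

def descentWord {m : ℕ} (f : Fin (m + 1) → α) : Fin m → Bool :=
  fun i => decide (f i.succ < f i.castSucc)

lemma isTurn_iff {a b c : α} (hab : a ≠ b) (hbc : b ≠ c) :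
    ((a < b ∧ c < b) ∨ (b < a ∧ b < c)) ↔ decide (b < a) ≠ decide (c < b) := by
  rcases hab.lt_or_gt with h | h <;> rcases hbc.lt_or_gt with h' | h' <;>
    simp [h, h', h.not_gt, h'.not_gt]

lemma turnsCount_ofFn {m : ℕ} {f : Fin (m + 2) → α} (hf : Function.Injective f) :
    turnsCount (List.ofFn f) = #(changeSet (descentWord f)) := by
  rw [count_ofFn_eq_sum _ turnsCount (fun _ _ _ _ => rfl) (fun _ _ => rfl), changeSet,
    Finset.card_filter]
  refine Finset.sum_congr rfl fun i _ => if_congr ?_ rfl rfl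
  exact isTurn_iff (hf.ne Fin.castSucc_lt_succ.ne) (hf.ne Fin.castSucc_lt_succ.ne)

lemma peaksCount_ofFn_eq_zero_iff : ∀ {N : ℕ} (f : Fin N → α),
    peaksCount (List.ofFn f) = 0 ↔
      ∀ i j k : Fin N, (i : ℕ) + 1 = j → (j : ℕ) + 1 = k → ¬ (f i < f j ∧ f k < f j)
  | 0, f => by simp [peaksCount]
  | 1, f => by
    simp only [List.ofFn_succ, List.ofFn_zero, peaksCount, true_iff]
    omega
  | m + 2, f => by
    rw [count_ofFn_eq_sum (fun a b c => a < b ∧ c < b) peaksCount (fun _ _ _ _ => rfl)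
      (fun _ _ => rfl)]
    simp only [Finset.sum_eq_zero_iff, Finset.mem_univ, ite_eq_right_iff, one_ne_zero, imp_false,
      true_implies]
    constructor
    · intro h i j k hij hjk
      let l : Fin m := ⟨i, by omega⟩
      have hi : i = l.castSucc.castSucc := rfl
      have hj : j = l.succ.castSucc := Fin.ext (by simp [l]; omega)
      have hk : k = l.succ.succ := Fin.ext (by simp [l]; omega)
      rw [hi, hj, hk]
      exact h l
    · intro h i
      exact h _ _ _ rfl rfl

-- A maximum of `f` on `[a, c]` would lie strictly inside and be a peak.
lemma lt_or_lt_of_forall_not_peak {N : ℕ} {f : Fin N → α} (hf : Function.Injective f)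
    (hpk : ∀ i j k : Fin N, (i : ℕ) + 1 = j → (j : ℕ) + 1 = k →
      ¬ (f i < f j ∧ f k < f j))
    {a b c : Fin N} (hab : a < b) (hbc : b < c) : f b < f a ∨ f b < f c := by
  by_contra! h
  obtain ⟨i, hi, hmax⟩ :=
    (Finset.Icc a c).exists_max_image f ⟨a, by simp [(hab.trans hbc).le]⟩
  rw [Finset.mem_Icc] at hi
  have hbi : f b ≤ f i := hmax b (by simp [hab.le, hbc.le])
  have hai : a < i := hi.1.lt_of_ne fun hai => hab.ne (hf (le_antisymm h.1 (by rwa [hai])))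
  have hic : i < c := hi.2.lt_of_ne fun hic => hbc.ne' (hf (le_antisymm h.2 (by rwa [← hic])))
  rw [Fin.lt_def] at hai hic
  have hlt : ∀ j : Fin N, a ≤ j → j ≤ c → j ≠ i → f j < f i := fun j haj hjc hji =>
    (hmax j (Finset.mem_Icc.mpr ⟨haj, hjc⟩)).lt_of_ne (hf.ne hji)
  refine hpk ⟨i - 1, by omega⟩ i ⟨i + 1, by omega⟩ (by simp; omega) rfl ⟨?_, ?_⟩ <;>
    refine hlt _ ?_ ?_ ?_ <;> simp [Fin.le_def, Fin.ext_iff] <;> omega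

end Lists

lemma brP_eq {m : ℕ} (π : Equiv.Perm (Fin (m + 2))) :
    brP π = #(changeSet (descentWord π)) + 1 := by
  rw [brP, birunsCount, if_neg (by simp), turnsCount_ofFn π.injective]

lemma udrP_eq {m : ℕ} (σ : Equiv.Perm (Fin (m + 1))) :
    udrP σ = #(changeSet (Fin.cons false (descentWord σ) : Fin (m + 1) → Bool)) + 1 := by
  cases m with
  | zero => simp [udrP, udrCount, birunsCount, initDesc, turnsCount, changeSet]
  | succ m =>
    rw [udrP, udrCount, birunsCount, if_neg (by simp), turnsCount_ofFn σ.injective,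
      card_changeSet_cons, List.ofFn_succ, List.ofFn_succ]
    by_cases h : σ 1 < σ 0 <;> simp [initDesc, descentWord, h, add_comm]

section ValleyPerm

variable {N : ℕ}

-- Positions with `p` come first, in decreasing order, then the others in increasing order.
def valleyKey (p : Fin N → Bool) (x : Fin N) : ℤ := if p x then -(x : ℤ) - 1 else x

lemma valleyKey_injective (p : Fin N → Bool) : Function.Injective (valleyKey p) := by
  intro x y h
  unfold valleyKey at h
  split_ifs at h <;> omega

lemma valleyKey_lt_valleyKey_iff_of_lt {p : Fin N → Bool} {x y : Fin N} (hxy : x < y) :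
    valleyKey p y < valleyKey p x ↔ p y = true := by
  rw [Fin.lt_def] at hxy
  unfold valleyKey
  split_ifs <;> simp_all <;> omega

lemma lt_of_valleyKey_lt_valleyKey {p : Fin N → Bool} {x y : Fin N} (hx : p x = false)
    (h : valleyKey p x < valleyKey p y) : x < y := by
  rw [Fin.lt_def]
  unfold valleyKey at h
  split_ifs at h <;> simp_all
  omega

def valleyPerm (p : Fin N → Bool) : Equiv.Perm (Fin N) := (Tuple.sort (valleyKey p))⁻¹

lemma strictMono_valleyKey_comp_valleyPerm_inv (p : Fin N → Bool) :
    StrictMono (valleyKey p ∘ ⇑(valleyPerm p)⁻¹) := by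
  rw [valleyPerm, inv_inv]
  exact (Tuple.monotone_sort _).strictMono_of_injective
    ((valleyKey_injective p).comp (Tuple.sort _).injective)

variable {p : Fin N → Bool} {π : Equiv.Perm (Fin N)}

lemma eq_valleyPerm_of_strictMono (h : StrictMono (valleyKey p ∘ ⇑π⁻¹)) :
    π = valleyPerm p := by
  rw [valleyPerm, ← inv_eq_iff_eq_inv]
  exact Tuple.eq_sort_iff.mpr ⟨h.monotone, fun i j hij he => absurd he (h hij).ne⟩

lemma lt_iff_valleyKey_lt (h : StrictMono (valleyKey p ∘ ⇑π⁻¹)) {x y : Fin N} :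
    π x < π y ↔ valleyKey p x < valleyKey p y := by
  simpa using (h.lt_iff_lt (a := π x) (b := π y)).symm

lemma pkP_inv_eq_zero_of_strictMono (h : StrictMono (valleyKey p ∘ ⇑π⁻¹)) :
    pkP π⁻¹ = 0 := by
  rw [pkP, peaksCount_ofFn_eq_zero_iff]
  rintro i j k hij hjk ⟨hup, hdown⟩
  have hpj : p (π⁻¹ j) = false := by
    simpa using (valleyKey_lt_valleyKey_iff_of_lt hup).not.mp (h (Fin.lt_def.mpr (by omega))).asymm
  exact (lt_of_valleyKey_lt_valleyKey hpj (h (Fin.lt_def.mpr (by omega)))).asymm hdown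

end ValleyPerm

section PkZero

variable {m : ℕ}

lemma strictMono_valleyKey_of_pkP_inv_eq_zero {π : Equiv.Perm (Fin (m + 1))}
    (h : pkP π⁻¹ = 0) :
    StrictMono (valleyKey (fun u => decide (π u < π 0)) ∘ ⇑π⁻¹) := by
  rw [pkP, peaksCount_ofFn_eq_zero_iff] at h
  -- `π⁻¹` is smallest at `π 0`, so taking `π 0` as an end point orders each side of it.
  have hvalley {a b c : Fin (m + 1)} (hab : a < b) (hbc : b < c) :
      π⁻¹ b < π⁻¹ a ∨ π⁻¹ b < π⁻¹ c :=
    lt_or_lt_of_forall_not_peak π⁻¹.injective h hab hbc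
  suffices key : ∀ x y, π x < π y →
      valleyKey (fun u => decide (π u < π 0)) x < valleyKey (fun u => decide (π u < π 0)) y by
    intro a b hab
    simpa using key (π⁻¹ a) (π⁻¹ b) (by simpa using hab)
  intro x y hxy
  rcases lt_or_ge (π x) (π 0) with hx | hx <;> rcases lt_or_ge (π y) (π 0) with hy | hy
  · have hyx : y < x := by simpa using hvalley hxy hy
    rw [Fin.lt_def] at hyx
    simp [valleyKey, hx, hy]
    omega
  · simp [valleyKey, hx, hy.not_gt]
  · exact absurd (hy.trans_le hx) hxy.asymm
  · have hxy' : x < y := by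
      rcases hx.lt_or_eq with hx' | hx'
      · simpa using hvalley hx' hxy
      · rw [π.injective hx'.symm]
        exact Fin.pos_iff_ne_zero.mpr fun hy0 => hxy.ne (by rw [hy0, hx'])
    rw [Fin.lt_def] at hxy'
    simp [valleyKey, hx.not_gt, hy.not_gt]
    omega

lemma descentWord_eq_tail {p : Fin (m + 1) → Bool} {π : Equiv.Perm (Fin (m + 1))}
    (h : StrictMono (valleyKey p ∘ ⇑π⁻¹)) : descentWord π = Fin.tail p := by
  funext v
  simp [descentWord, Fin.tail, lt_iff_valleyKey_lt h,
    valleyKey_lt_valleyKey_iff_of_lt (Fin.castSucc_lt_succ (i := v))]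

def descentWordEquiv (m : ℕ) :
    {π : Equiv.Perm (Fin (m + 1)) // pkP π⁻¹ = 0} ≃ (Fin m → Bool) where
  toFun π := descentWord π.1
  invFun w := ⟨valleyPerm (Fin.cons false w),
    pkP_inv_eq_zero_of_strictMono (strictMono_valleyKey_comp_valleyPerm_inv _)⟩
  left_inv := by
    rintro ⟨π, hπ⟩
    have h := strictMono_valleyKey_of_pkP_inv_eq_zero hπ
    apply Subtype.ext
    change valleyPerm (Fin.cons false (descentWord π)) = π
    have hp : Fin.cons false (descentWord π) = fun u => decide (π u < π 0) := by
      rw [descentWord_eq_tail h, ← Fin.cons_self_tail (fun u => decide (π u < π 0))]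
      simp
    rw [hp, ← eq_valleyPerm_of_strictMono h]
  right_inv w := by
    change descentWord (valleyPerm (Fin.cons false w)) = w
    rw [descentWord_eq_tail (strictMono_valleyKey_comp_valleyPerm_inv _), Fin.tail_cons]

lemma card_descentWord_pkP_inv_eq_zero (Q : (Fin m → Bool) → Prop) :
    Nat.card {π : Equiv.Perm (Fin (m + 1)) // Q (descentWord π) ∧ pkP π⁻¹ = 0}
      = Nat.card {w // Q w} := by
  rw [← Nat.card_congr ((descentWordEquiv m).subtypeEquiv (p := fun π => Q (descentWord π.1))
    fun _ => Iff.rfl)]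
  exact Nat.card_congr ((Equiv.subtypeSubtypeEquivSubtypeInter _ _).trans
    (Equiv.subtypeEquivRight fun _ => and_comm)).symm

end PkZero

theorem card_br_k_ipk_zero (n k : ℕ) (hn : 2 ≤ n) (hk : 1 ≤ k) :
    Nat.card {π : Equiv.Perm (Fin n) // brP π = k ∧ pkP π⁻¹ = 0}
        = 2 * Nat.choose (n - 2) (k - 1) ∧
    Nat.card {π : Equiv.Perm (Fin n) // brP π = k ∧ pkP π⁻¹ = 0}
        = 2 * Nat.card {σ : Equiv.Perm (Fin (n - 1)) // udrP σ = k ∧ pkP σ⁻¹ = 0} := by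
  obtain ⟨m, rfl⟩ : ∃ m, n = m + 2 := ⟨n - 2, by omega⟩
  obtain ⟨j, rfl⟩ : ∃ j, k = j + 1 := ⟨k - 1, by omega⟩
  have hbr : Nat.card {π : Equiv.Perm (Fin (m + 2)) // brP π = j + 1 ∧ pkP π⁻¹ = 0}
      = 2 * m.choose j := by
    simp only [brP_eq, add_left_inj]
    rw [card_descentWord_pkP_inv_eq_zero (fun w => #(changeSet w) = j), card_changeSet_eq_choose]
  have hudr : Nat.card {σ : Equiv.Perm (Fin (m + 1)) // udrP σ = j + 1 ∧ pkP σ⁻¹ = 0}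
      = m.choose j := by
    simp only [udrP_eq, add_left_inj]
    rw [card_descentWord_pkP_inv_eq_zero
      (fun w => #(changeSet (Fin.cons false w : Fin (m + 1) → Bool)) = j),
      card_changeSet_cons_eq_choose]
  exact ⟨hbr, hbr.trans (by rw [← hudr]; rfl)⟩
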